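/- arXiv:1802.10339 — 2 statements merged into one kernel-verified Lean document; each statement's English description precedes it below -/
import Mathlib

section
/- Let f ∈ ℝ[X₁,…,Xₙ] be such that f = vᵀ G v for some positive definite symmetric real matrix G, where v is the vector of monomials Xᵅ for α in a finite set A. Let ε be a rational number with 0 < ε ≤ λ/2, where λ is the smallest eigenvalue of G. Then the polynomial f − ε · Σ_{α ∈ A} X^{2α} is a sum of squares of real polynomials. -/
/-!
Every eigenvalue of `G` is at least `λ ≥ 2ε > ε`, so `G - εI` is positive semidefinite and hence
a Gram matrix `BᵀB`. With `v = (Xᵅ)_{α ∈ A}` this gives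
`f - ε Σ X^{2α} = vᵀ (G - εI) v = (Bv)ᵀ (Bv)`, a sum of squares.
-/

open MvPolynomial
open scoped Matrix MatrixOrder ComplexOrder

namespace Matrix

section Spectral

variable {𝕜 n : Type*} [RCLike 𝕜] [Fintype n] [DecidableEq n]

theorem IsHermitian.posSemidef_sub_smul_one {A : Matrix n n 𝕜} (hA : A.IsHermitian) {c : ℝ}
    (hc : ∀ i, c ≤ hA.eigenvalues i) : (A - c • 1).PosSemidef := by
  rw [← nonneg_iff_posSemidef, sub_nonneg, ← Algebra.algebraMap_eq_smul_one,
    algebraMap_le_iff_le_spectrum hA.isSelfAdjoint, hA.spectrum_real_eq_range_eigenvalues]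
  rintro _ ⟨i, rfl⟩
  exact hc i

theorem PosSemidef.exists_eq_conjTranspose_mul_self {A : Matrix n n 𝕜} (hA : A.PosSemidef) :
    ∃ B : Matrix n n 𝕜, A = Bᴴ * B :=
  CStarAlgebra.nonneg_iff_eq_star_mul_self.mp hA.nonneg

end Spectral

theorem isSumSq_dotProduct_transpose_mul_self_mulVec {R m n : Type*} [CommSemiring R]
    [Fintype m] [Fintype n] (B : Matrix m n R) (v : n → R) :
    IsSumSq (v ⬝ᵥ ((Bᵀ * B) *ᵥ v)) := by
  rw [← mulVec_mulVec, dotProduct_mulVec, vecMul_transpose]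
  exact IsSumSq.sum_mul_self _ _

end Matrix

namespace MvPolynomial

variable {σ R : Type*} [CommSemiring R] (A : Finset (σ →₀ ℕ))

noncomputable def monomialVec : A → MvPolynomial σ R := fun α => monomial (α : σ →₀ ℕ) 1

theorem monomialVec_dotProduct_map_C_mulVec (G : Matrix A A R) :
    monomialVec A ⬝ᵥ (G.map C *ᵥ monomialVec A) =
      ∑ α ∈ A.attach, ∑ β ∈ A.attach,
        C (G α β) * monomial ((α : σ →₀ ℕ) + (β : σ →₀ ℕ)) (1 : R) := by
  simp only [dotProduct, Matrix.mulVec, Finset.mul_sum, monomialVec, Matrix.map_apply,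
    Finset.univ_eq_attach]
  refine Finset.sum_congr rfl fun α _ => Finset.sum_congr rfl fun β _ => ?_
  simp only [mul_left_comm _ (C _), monomial_mul, one_mul]

theorem monomialVec_dotProduct_self :
    monomialVec A ⬝ᵥ monomialVec A = ∑ α ∈ A, monomial (2 • α) (1 : R) := by
  rw [dotProduct, ← Finset.sum_attach A]
  simp [monomialVec, monomial_mul, two_smul]

end MvPolynomial

theorem stmt2_general (n : ℕ) (A : Finset (Fin n →₀ ℕ)) (f : MvPolynomial (Fin n) ℝ)
    (G : Matrix {α // α ∈ A} {α // α ∈ A} ℝ)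
    (hG : G.IsHermitian)
    (hf : f = ∑ α ∈ A.attach, ∑ β ∈ A.attach,
      C (G α β) * monomial ((α : Fin n →₀ ℕ) + (β : Fin n →₀ ℕ)) (1 : ℝ))
    (lam : ℝ) (hlam : IsLeast (Set.range hG.eigenvalues) lam)
    (ε : ℚ) (hε0 : 0 < ε) (hε : (ε : ℝ) ≤ lam / 2) :
    IsSumSq (f - C (ε : ℝ) * ∑ α ∈ A, monomial (2 • α) (1 : ℝ)) := by
  have hε_le : (ε : ℝ) ≤ lam := by linarith [(Rat.cast_pos (K := ℝ)).mpr hε0]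
  obtain ⟨B, hB⟩ := (hG.posSemidef_sub_smul_one fun i =>
    hε_le.trans (hlam.2 ⟨i, rfl⟩)).exists_eq_conjTranspose_mul_self
  have hgram : f - C (ε : ℝ) * ∑ α ∈ A, monomial (2 • α) (1 : ℝ) =
      monomialVec A ⬝ᵥ ((G - (ε : ℝ) • 1).map C *ᵥ monomialVec A) := by
    rw [Matrix.map_sub _ (map_sub C), Matrix.map_smul' _ _ _ (map_mul C),
      Matrix.map_one _ (map_zero C) (map_one C), Matrix.sub_mulVec, Matrix.smul_mulVec,
      Matrix.one_mulVec, dotProduct_sub, dotProduct_smul, smul_eq_mul,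
      monomialVec_dotProduct_map_C_mulVec, monomialVec_dotProduct_self, hf]
  rw [hgram, hB, Matrix.conjTranspose_eq_transpose_of_trivial, Matrix.map_mul, Matrix.transpose_map]
  exact Matrix.isSumSq_dotProduct_transpose_mul_self_mulVec _ _

/-- If `f = vᵀ G v` with `G` positive definite symmetric, `v` the vector of monomials `Xᵅ`
for `α ∈ A`, and `0 < ε ≤ λ/2` with `λ` the smallest eigenvalue of `G`, then
`f - ε·Σ_{α∈A} X^{2α}` is a sum of squares. -/
theorem stmt2 (n : ℕ) (A : Finset (Fin n →₀ ℕ)) (f : MvPolynomial (Fin n) ℝ)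
    (G : Matrix {α // α ∈ A} {α // α ∈ A} ℝ)
    (hG : G.IsHermitian) (hpd : G.PosDef)
    (hf : f = ∑ α ∈ A.attach, ∑ β ∈ A.attach,
      C (G α β) * monomial ((α : Fin n →₀ ℕ) + (β : Fin n →₀ ℕ)) (1 : ℝ))
    (lam : ℝ) (hlam : IsLeast (Set.range hG.eigenvalues) lam)
    (ε : ℚ) (hε0 : 0 < ε) (hε : (ε : ℝ) ≤ lam / 2) :
    IsSumSq (f - C (ε : ℝ) * ∑ α ∈ A, monomial (2 • α) (1 : ℝ)) :=
  stmt2_general n A f G hG hf lam hlam ε hε0 hε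
end

section
/- Let A ⊆ ℕⁿ be a finite set of multi-indices with cardinality r ≥ 1, let ε > 0 be a real number, and let u ∈ ℝ[X₁,…,Xₙ] be a polynomial whose support is contained in {α + β : α, β ∈ A} and whose coefficients all satisfy |u_γ| ≤ ε/r. Then the polynomial ε·Σ_{α∈A} X^{2α} + u is a sum of squares of polynomials with nonnegative real weights. -/
/-!
Write `γ = α + β` with `α, β ∈ A`. The square `(|t|/2) (X^α ± X^β)²` equals
`t X^γ + (|t|/2) (X^{2α} + X^{2β})` for the right sign, so `t X^γ` is absorbed at the cost of
`|t|/2` from each of `X^{2α}` and `X^{2β}`. Spreading `u_γ` evenly over all representations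
`γ = α + β` gives every pair `(α, β) ∈ A × A` a coefficient of size at most `ε / #A`; since `α`
occurs in `#A` pairs on each side, the total cost charged to `X^{2α}` is at most `ε`.
-/

open MvPolynomial Finset

theorem IsSumSq.exists_fin_sum_sq {R : Type*} [CommSemiring R] {p : R} (hp : IsSumSq p) :
    ∃ (N : ℕ) (s : Fin N → R), p = ∑ i, s i ^ 2 := by
  induction hp with
  | zero => exact ⟨0, Fin.elim0, by simp⟩
  | sq_add a _ ih =>
    obtain ⟨N, s, rfl⟩ := ih
    exact ⟨N + 1, Fin.cons a s, by simp [Fin.sum_univ_succ, sq]⟩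

def addRepCount {M : Type*} [Add M] [DecidableEq M] (A : Finset M) (γ : M) : ℕ :=
  #{p ∈ A ×ˢ A | p.1 + p.2 = γ}

theorem addRepCount_ne_zero {M : Type*} [Add M] [DecidableEq M] {A : Finset M} {α β : M}
    (hα : α ∈ A) (hβ : β ∈ A) : addRepCount A (α + β) ≠ 0 :=
  card_ne_zero_of_mem (mem_filter.2 ⟨mk_mem_product hα hβ, rfl⟩)

namespace MvPolynomial

variable {σ : Type*}

theorem monomial_add_monomial_sq {R : Type*} [CommSemiring R] (a b : σ →₀ ℕ) (x y : R) :
    (monomial a x + monomial b y) ^ 2 =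
      monomial (2 • a) (x ^ 2) + monomial (2 • b) (y ^ 2) + monomial (a + b) (2 * x * y) := by
  rw [add_sq, monomial_pow, monomial_pow, mul_assoc, monomial_mul, mul_assoc, two_mul, two_mul,
    map_add]
  ring

theorem isSumSq_monomial_add_add_monomial_two_nsmul {t : ℝ} (a b : σ →₀ ℕ) :
    IsSumSq (monomial (a + b) t + monomial (2 • a) (|t| / 2) + monomial (2 • b) (|t| / 2)) := by
  set x := √(|t| / 2)
  have hx : x ^ 2 = |t| / 2 := Real.sq_sqrt (by positivity)
  obtain ⟨y, hy, hxy⟩ : ∃ y, y ^ 2 = |t| / 2 ∧ 2 * x * y = t := by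
    rcases abs_choice t with h | h
    · exact ⟨x, hx, by rw [mul_assoc, ← sq, hx, h]; ring⟩
    · exact ⟨-x, by rw [neg_sq, hx], by rw [mul_neg, mul_assoc, ← sq, hx, h]; ring⟩
  have hsq : monomial (a + b) t + monomial (2 • a) (|t| / 2) + monomial (2 • b) (|t| / 2) =
      (monomial a x + monomial b y) ^ 2 := by
    rw [monomial_add_monomial_sq, hx, hy, hxy]; ring
  rw [hsq]
  exact (IsSquare.sq _).isSumSq

theorem isSumSq_monomial_two_nsmul {c : ℝ} (hc : 0 ≤ c) (α : σ →₀ ℕ) :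
    IsSumSq (monomial (2 • α) c) := by
  rw [← Real.sq_sqrt hc, ← monomial_pow]
  exact (IsSquare.sq _).isSumSq

theorem isSumSq_C_mul_sum_monomial_add_sum_monomial (A : Finset (σ →₀ ℕ)) (ε : ℝ)
    (t : (σ →₀ ℕ) × (σ →₀ ℕ) → ℝ) (ht : ∀ p ∈ A ×ˢ A, |t p| ≤ ε / #A) :
    IsSumSq (C ε * ∑ α ∈ A, monomial (2 • α) 1 + ∑ p ∈ A ×ˢ A, monomial (p.1 + p.2) (t p)) := by
  set w : (σ →₀ ℕ) → ℝ := fun α => ∑ β ∈ A, (|t (α, β)| / 2 + |t (β, α)| / 2)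
  have hw : ∀ α ∈ A, w α ≤ ε := fun α hα =>
    calc w α ≤ ∑ _β ∈ A, ε / #A := sum_le_sum fun β hβ => by
            linarith [ht (α, β) (mk_mem_product hα hβ), ht (β, α) (mk_mem_product hβ hα)]
      _ = ε := by
            rw [sum_const, nsmul_eq_mul]
            field_simp [Nat.cast_ne_zero.2 (card_ne_zero_of_mem hα)]
  have hsplit : C ε * ∑ α ∈ A, monomial (2 • α) 1 + ∑ p ∈ A ×ˢ A, monomial (p.1 + p.2) (t p) =
      ∑ p ∈ A ×ˢ A, (monomial (p.1 + p.2) (t p) + monomial (2 • p.1) (|t p| / 2)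
        + monomial (2 • p.2) (|t p| / 2)) + ∑ α ∈ A, monomial (2 • α) (ε - w α) := by
    simp only [w, mul_sum, C_mul_monomial, mul_one, map_sub, map_sum, map_add, sum_add_distrib,
      sum_sub_distrib, sum_product]
    rw [sum_comm (s := A) (t := A) (f := fun x y => monomial (2 • x) (|t (y, x)| / 2))]
    abel
  rw [hsplit]
  exact (IsSumSq.sum fun p _ => isSumSq_monomial_add_add_monomial_two_nsmul p.1 p.2).add
    (IsSumSq.sum fun α hα => isSumSq_monomial_two_nsmul (sub_nonneg.2 (hw α hα)) α)

theorem eq_sum_monomial_add_div_addRepCount [DecidableEq σ] {K : Type*} [Field K] [CharZero K]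
    (u : MvPolynomial σ K) (A : Finset (σ →₀ ℕ))
    (hsupp : ∀ γ ∈ u.support, ∃ α ∈ A, ∃ β ∈ A, γ = α + β) :
    u = ∑ p ∈ A ×ˢ A,
      monomial (p.1 + p.2) (coeff (p.1 + p.2) u / addRepCount A (p.1 + p.2)) := by
  ext δ
  rw [coeff_sum]
  simp only [coeff_monomial]
  rw [← sum_filter, sum_congr rfl fun p hp => by rw [(mem_filter.1 hp).2], sum_const,
    nsmul_eq_mul, ← addRepCount]
  by_cases hδ : δ ∈ u.support
  · obtain ⟨α, hα, β, hβ, rfl⟩ := hsupp δ hδ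
    rw [mul_div_cancel₀ _ (Nat.cast_ne_zero.2 (addRepCount_ne_zero hα hβ))]
  · rw [notMem_support_iff.1 hδ, zero_div, mul_zero]

end MvPolynomial

theorem stmt4_general (n : ℕ) (A : Finset (Fin n →₀ ℕ))
    (ε : ℝ) (u : MvPolynomial (Fin n) ℝ)
    (hsupp : ∀ γ ∈ u.support, ∃ α ∈ A, ∃ β ∈ A, γ = α + β)
    (hcoeff : ∀ γ, |coeff γ u| ≤ ε / A.card) :
    ∃ (N : ℕ) (c : Fin N → ℝ) (s : Fin N → MvPolynomial (Fin n) ℝ),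
      (∀ i, 0 ≤ c i) ∧
      C ε * (∑ α ∈ A, monomial (2 • α) (1 : ℝ)) + u = ∑ i, C (c i) * s i ^ 2 := by
  have hbound : ∀ p ∈ A ×ˢ A,
      |coeff (p.1 + p.2) u / addRepCount A (p.1 + p.2)| ≤ ε / #A := fun p hp => by
    obtain ⟨hα, hβ⟩ := mem_product.1 hp
    have hk : (1 : ℝ) ≤ addRepCount A (p.1 + p.2) :=
      Nat.one_le_cast.2 (Nat.one_le_iff_ne_zero.2 (addRepCount_ne_zero hα hβ))
    rw [abs_div, Nat.abs_cast]
    exact (div_le_self (abs_nonneg _) hk).trans (hcoeff _)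
  have hsos := isSumSq_C_mul_sum_monomial_add_sum_monomial A ε _ hbound
  rw [← eq_sum_monomial_add_div_addRepCount u A hsupp] at hsos
  obtain ⟨N, s, hs⟩ := hsos.exists_fin_sum_sq
  exact ⟨N, 1, s, fun _ => zero_le_one, by simp [hs]⟩

/-- Correctness of the `absorb` step: if the support of `u` is contained in
`{α + β : α, β ∈ A}` and all coefficients of `u` satisfy `|u_γ| ≤ ε / #A`,
then `ε·Σ_{α∈A} X^{2α} + u` is a weighted sum of squares. -/
theorem stmt4 (n : ℕ) (A : Finset (Fin n →₀ ℕ)) (hA : 1 ≤ A.card)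
    (ε : ℝ) (hε : 0 < ε) (u : MvPolynomial (Fin n) ℝ)
    (hsupp : ∀ γ ∈ u.support, ∃ α ∈ A, ∃ β ∈ A, γ = α + β)
    (hcoeff : ∀ γ, |coeff γ u| ≤ ε / A.card) :
    ∃ (N : ℕ) (c : Fin N → ℝ) (s : Fin N → MvPolynomial (Fin n) ℝ),
      (∀ i, 0 ≤ c i) ∧
      C ε * (∑ α ∈ A, monomial (2 • α) (1 : ℝ)) + u = ∑ i, C (c i) * s i ^ 2 :=
  stmt4_general n A ε u hsupp hcoeff
end
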